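/- arXiv:2101.05394 — 2 statements merged into one kernel-verified Lean document; each statement's English description precedes it below -/
import Mathlib

section
/- Let d be a positive integer, δ ∈ (0,1) and τ > 0. Define the Negative Binomial function N_{δ,τ}(θ) = ((1-δ)/(1-δ cos θ))^τ for θ ∈ [0,π]. Then the kernel (x,y) ↦ N_{δ,τ}(arccos⟨x,y⟩) is positive semidefinite on the unit sphere of ℝ^{d+1}; moreover, for every θ ∈ [0,π], N_{δ,τ}(θ) = Σ_{n=0}^∞ b_n(δ,τ) (cos θ)^n, where b_n(δ,τ) = ((τ)_n / n!) δ^n (1-δ)^τ ≥ 0 and Σ_{n=0}^∞ b_n(δ,τ) = 1. -/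
open Real MeasureTheory

/-- Pochhammer symbol (rising factorial) `(x)_n = x(x+1)⋯(x+n-1)`. -/
noncomputable def poch (x : ℝ) (n : ℕ) : ℝ := Polynomial.eval x (ascPochhammer ℝ n)

/-- The Negative Binomial family `N_{δ,τ}(θ) = ((1-δ)/(1-δ cos θ))^τ`. -/
noncomputable def negBinom (δ τ θ : ℝ) : ℝ := ((1 - δ) / (1 - δ * Real.cos θ)) ^ τ

/-!
The generalized binomial series `(1 - x)^(-τ) = Σ_n ((τ)_n / n!) x^n` for `|x| < 1`, applied at
`x = δ cos θ` and multiplied by `(1 - δ)^τ`, gives the expansion of `N_{δ,τ}`, and at `θ = 0` it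
shows that the coefficients sum to one. Each power kernel `⟨x, y⟩^n` is positive semidefinite,
being a Hadamard power of a Gram matrix (Schur product theorem), so the kernel
`N_{δ,τ}(arccos ⟨x, y⟩) = Σ_n b_n ⟨x, y⟩^n` with `b_n ≥ 0` is positive semidefinite as well.
-/

open scoped Nat

theorem poch_div_factorial_eq_choose (τ : ℝ) (n : ℕ) :
    poch τ n / n ! = Ring.choose (τ + n - 1) n := by
  rw [← Ring.multichoose_eq, eq_comm, eq_div_iff (by positivity), mul_comm, ← nsmul_eq_mul,
    Ring.factorial_nsmul_multichoose_eq_ascPochhammer, poch,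
    Polynomial.ascPochhammer_smeval_eq_eval]

theorem hasSum_poch_div_factorial_mul_pow (τ : ℝ) {x : ℝ} (hx : |x| < 1) :
    HasSum (fun n ↦ poch τ n / n ! * x ^ n) (1 / (1 - x) ^ τ) := by
  have := (one_div_one_sub_rpow_hasFPowerSeriesOnBall_zero τ).hasSum
    (y := x) (by rwa [mem_eball_zero_iff, ← ofReal_norm, ENNReal.ofReal_lt_one])
  simpa [poch_div_factorial_eq_choose, FormalMultilinearSeries.ofScalars_apply_eq, mul_comm]
    using this

noncomputable def negBinomCoeff (δ τ : ℝ) (n : ℕ) : ℝ := poch τ n / n ! * δ ^ n * (1 - δ) ^ τ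

theorem negBinomCoeff_nonneg {δ τ : ℝ} (hδ₀ : 0 ≤ δ) (hδ₁ : δ ≤ 1) (hτ : 0 < τ) (n : ℕ) :
    0 ≤ negBinomCoeff δ τ n := by
  have := ascPochhammer_pos n τ hτ
  have : 0 ≤ 1 - δ := by linarith
  unfold negBinomCoeff poch
  positivity

theorem hasSum_negBinomCoeff_mul_cos_pow {δ : ℝ} (hδ : |δ| < 1) (τ θ : ℝ) :
    HasSum (fun n ↦ negBinomCoeff δ τ n * cos θ ^ n) (negBinom δ τ θ) := by
  have hx : |δ * cos θ| < 1 := by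
    rw [abs_mul]
    exact (mul_le_of_le_one_right (abs_nonneg δ) (abs_cos_le_one θ)).trans_lt hδ
  have h₁ : 0 ≤ 1 - δ := by linarith [le_abs_self δ]
  have h₂ : 0 ≤ 1 - δ * cos θ := by linarith [le_abs_self (δ * cos θ)]
  have h := (hasSum_poch_div_factorial_mul_pow τ hx).mul_right ((1 - δ) ^ τ)
  rw [negBinom, div_rpow h₁ h₂, div_eq_mul_one_div, mul_comm]
  simpa only [negBinomCoeff, mul_pow, mul_assoc, mul_comm, mul_left_comm] using h

theorem negBinom_zero {δ : ℝ} (hδ : δ ≠ 1) (τ : ℝ) : negBinom δ τ 0 = 1 := by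
  rw [negBinom, cos_zero, mul_one, div_self (sub_ne_zero.2 hδ.symm), one_rpow]

open scoped ComplexOrder in
theorem posSemidef_inner_pow {𝕜 E ι : Type*} [RCLike 𝕜] [NormedAddCommGroup E]
    [InnerProductSpace 𝕜 E] [Finite ι] (v : ι → E) (n : ℕ) :
    (Matrix.of fun i j ↦ inner 𝕜 (v i) (v j) ^ n).PosSemidef := by
  induction n with
  | zero =>
    convert Matrix.posSemidef_gram 𝕜 (fun _ : ι ↦ (1 : 𝕜)) using 1
    ext; simp [Matrix.gram]
  | succ n ih =>
    convert ih.hadamard (Matrix.posSemidef_gram 𝕜 v) using 1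
    ext; simp [Matrix.gram, pow_succ]

section

variable {E ι : Type*} [NormedAddCommGroup E] [InnerProductSpace ℝ E] [Fintype ι]

theorem sum_sum_mul_inner_pow_nonneg (v : ι → E) (c : ι → ℝ) (n : ℕ) :
    0 ≤ ∑ i, ∑ j, c i * c j * inner ℝ (v i) (v j) ^ n := by
  have := (posSemidef_inner_pow v n).dotProduct_mulVec_nonneg c
  simpa [dotProduct, Matrix.mulVec, Finset.mul_sum, mul_assoc, mul_comm, mul_left_comm] using this

theorem sum_sum_mul_nonneg_of_hasSum_inner_pow {a : ℕ → ℝ} (ha : ∀ n, 0 ≤ a n) {f : ℝ → ℝ}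
    (v : ι → E)
    (hf : ∀ i j, HasSum (fun n ↦ a n * inner ℝ (v i) (v j) ^ n) (f (inner ℝ (v i) (v j))))
    (c : ι → ℝ) : 0 ≤ ∑ i, ∑ j, c i * c j * f (inner ℝ (v i) (v j)) := by
  have hsum : HasSum (fun n ↦ a n * ∑ i, ∑ j, c i * c j * inner ℝ (v i) (v j) ^ n)
      (∑ i, ∑ j, c i * c j * f (inner ℝ (v i) (v j))) := by
    simp_rw [Finset.mul_sum, mul_left_comm (a _)]
    exact hasSum_sum fun i _ ↦ hasSum_sum fun j _ ↦ (hf i j).mul_left _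
  exact hsum.nonneg fun n ↦ mul_nonneg (ha n) (sum_sum_mul_inner_pow_nonneg v c n)

end

theorem negBinom_posSemidef_and_expansion_general (d : ℕ)
    (δ τ : ℝ) (hδ : δ ∈ Set.Ioo (0:ℝ) 1) (hτ : 0 < τ) :
    (∀ m : ℕ, 0 < m → ∀ x : Fin m → EuclideanSpace ℝ (Fin (d + 1)),
      (∀ i, ‖x i‖ = 1) → ∀ c : Fin m → ℝ,
        0 ≤ ∑ i, ∑ j, c i * c j * negBinom δ τ (Real.arccos (inner ℝ (x i) (x j)))) ∧
    (∀ n : ℕ, 0 ≤ poch τ n / n.factorial * δ ^ n * (1 - δ) ^ τ) ∧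
    HasSum (fun n : ℕ => poch τ n / n.factorial * δ ^ n * (1 - δ) ^ τ) 1 ∧
    ∀ θ ∈ Set.Icc (0:ℝ) Real.pi,
      HasSum (fun n : ℕ => poch τ n / n.factorial * δ ^ n * (1 - δ) ^ τ * Real.cos θ ^ n)
        (negBinom δ τ θ) := by
  obtain ⟨hδ₀, hδ₁⟩ := hδ
  have hcoeff := negBinomCoeff_nonneg hδ₀.le hδ₁.le hτ
  have hexp := hasSum_negBinomCoeff_mul_cos_pow (abs_lt.2 ⟨by linarith, hδ₁⟩) τ
  refine ⟨fun m _ x hx c ↦ ?_, hcoeff, ?_, fun θ _ ↦ hexp θ⟩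
  · refine sum_sum_mul_nonneg_of_hasSum_inner_pow hcoeff (f := fun t ↦ negBinom δ τ (arccos t)) x
      (fun i j ↦ ?_) c
    have hinner : |inner ℝ (x i) (x j)| ≤ 1 := by
      simpa [hx i, hx j] using abs_real_inner_le_norm (x i) (x j)
    simpa only [cos_arccos (abs_le.1 hinner).1 (abs_le.1 hinner).2]
      using hexp (arccos (inner ℝ (x i) (x j)))
  · simpa only [cos_zero, one_pow, mul_one, negBinom_zero hδ₁.ne, negBinomCoeff] using hexp 0

/-- The Negative Binomial kernel is positive semidefinite on the unit sphere of `ℝ^{d+1}`,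
its coefficients `b_n(δ,τ) = ((τ)_n/n!) δ^n (1-δ)^τ` are nonnegative and sum to one, and
`N_{δ,τ}(θ) = Σ_n b_n(δ,τ) (cos θ)^n` for every `θ ∈ [0,π]`. -/
theorem negBinom_posSemidef_and_expansion (d : ℕ) (hd : 0 < d)
    (δ τ : ℝ) (hδ : δ ∈ Set.Ioo (0:ℝ) 1) (hτ : 0 < τ) :
    (∀ m : ℕ, 0 < m → ∀ x : Fin m → EuclideanSpace ℝ (Fin (d + 1)),
      (∀ i, ‖x i‖ = 1) → ∀ c : Fin m → ℝ,
        0 ≤ ∑ i, ∑ j, c i * c j * negBinom δ τ (Real.arccos (inner ℝ (x i) (x j)))) ∧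
    (∀ n : ℕ, 0 ≤ poch τ n / n.factorial * δ ^ n * (1 - δ) ^ τ) ∧
    HasSum (fun n : ℕ => poch τ n / n.factorial * δ ^ n * (1 - δ) ^ τ) 1 ∧
    ∀ θ ∈ Set.Icc (0:ℝ) Real.pi,
      HasSum (fun n : ℕ => poch τ n / n.factorial * δ ^ n * (1 - δ) ^ τ * Real.cos θ ^ n)
        (negBinom δ τ θ) :=
  negBinom_posSemidef_and_expansion_general d δ τ hδ hτ
end

section
/- Let τ, α > 0 and ν > 1, and let F_{τ,α,ν}(θ) = (1/B(α,ν)) ∫₀¹ ((1-δ)/(1-δ cos θ))^τ δ^{α-1} (1-δ)^{ν-1} dδ. Then there exists a constant b > 0 such that lim_{θ → 0+} (F_{τ,α,ν}(0) - F_{τ,α,ν}(θ)) / θ² = b. In particular, the fractal index of a Gaussian random field on the 2-sphere with correlation F_{τ,α,ν} equals a = 2. -/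
open Real MeasureTheory Filter

/-- Euler Beta function `B(a,b) = Γ(a)Γ(b)/Γ(a+b)`. -/
noncomputable def betaFn (a b : ℝ) : ℝ := Real.Gamma a * Real.Gamma b / Real.Gamma (a + b)

/-- The `F`-family correlation function. -/
noncomputable def Ffam (τ α ν θ : ℝ) : ℝ :=
  (1 / betaFn α ν) * ∫ δ in Set.Ioo (0:ℝ) 1,
    ((1 - δ) / (1 - δ * Real.cos θ)) ^ τ * δ ^ (α - 1) * (1 - δ) ^ (ν - 1)

/-!
Write `r_θ(δ) = (1 - δ) / (1 - δ cos θ) ∈ (0, 1]`, so that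
`F(0) - F(θ) = B(α, ν)⁻¹ ∫₀¹ (1 - r_θ(δ)^τ) δ^(α-1) (1-δ)^(ν-1) dδ`.
Since `1 - r_θ(δ) = δ (1 - cos θ) / (1 - δ cos θ)` and `s ↦ s^τ` has derivative `τ` at `1`,
`(1 - r_θ(δ)^τ) / θ² → τ δ / (2 (1 - δ))` pointwise. By `1 - r^τ ≤ τ (r⁻¹ - 1)` (from
`exp x ≥ 1 + x` and `log r ≥ 1 - r⁻¹`) and `1 - cos θ ≤ θ² / 2`, this limit also dominates the
integrand, and against the weight it is the Beta kernel with parameters `(α + 1, ν - 1)`,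
integrable exactly when `ν > 1`. Dominated convergence gives the limit
`b = τ B(α + 1, ν - 1) / (2 B(α, ν)) > 0`.
-/

open Set Topology

lemma integrableOn_rpow_mul_one_sub_rpow {p q : ℝ} (hp : -1 < p) (hq : -1 < q) :
    IntegrableOn (fun x : ℝ => x ^ p * (1 - x) ^ q) (Ioo 0 1) := by
  have h := (Complex.betaIntegral_convergent (u := (p + 1 : ℝ)) (v := (q + 1 : ℝ))
    (by rw [Complex.ofReal_re]; linarith) (by rw [Complex.ofReal_re]; linarith)).norm
  rw [intervalIntegrable_iff_integrableOn_Ioo_of_le zero_le_one] at h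
  refine h.congr_fun (fun x hx => ?_) measurableSet_Ioo
  have h1 : (1 - (x : ℂ)) = ((1 - x : ℝ) : ℂ) := by push_cast; ring
  dsimp only
  rw [norm_mul, h1, Complex.norm_cpow_eq_rpow_re_of_pos hx.1,
    Complex.norm_cpow_eq_rpow_re_of_pos (sub_pos.2 hx.2)]
  simp

lemma integral_rpow_mul_one_sub_rpow_pos {p q : ℝ} (hp : -1 < p) (hq : -1 < q) :
    0 < ∫ x in Ioo (0 : ℝ) 1, x ^ p * (1 - x) ^ q := by
  rw [← integral_Ioc_eq_integral_Ioo, ← intervalIntegral.integral_of_le zero_le_one]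
  refine intervalIntegral.intervalIntegral_pos_of_pos_on ?_ (fun x hx => ?_) zero_lt_one
  · exact (intervalIntegrable_iff_integrableOn_Ioo_of_le zero_le_one).2
      (integrableOn_rpow_mul_one_sub_rpow hp hq)
  · have : 0 < 1 - x := sub_pos.2 hx.2
    have := hx.1
    positivity

lemma one_sub_cos_eq_sq_mul_sinc_sq (θ : ℝ) : 1 - cos θ = θ ^ 2 / 2 * sinc (θ / 2) ^ 2 := by
  rcases eq_or_ne θ 0 with rfl | hθ
  · simp
  · rw [sinc_of_ne_zero (by positivity), div_pow, sin_sq_eq_half_sub, mul_div_cancel₀ _ two_ne_zero]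
    field_simp

lemma tendsto_one_sub_cos_div_sq :
    Tendsto (fun θ => (1 - cos θ) / θ ^ 2) (𝓝[≠] 0) (𝓝 (1 / 2)) := by
  have h : Tendsto (fun θ => sinc (θ / 2) ^ 2 / 2) (𝓝 0) (𝓝 (1 / 2)) := by
    simpa [sinc_zero] using
      (((continuous_sinc.comp (continuous_id.div_const 2)).pow 2).div_const 2).tendsto 0
  refine (h.mono_left nhdsWithin_le_nhds).congr' ?_
  filter_upwards [self_mem_nhdsWithin] with θ (hθ : θ ≠ 0)
  rw [one_sub_cos_eq_sq_mul_sinc_sq]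
  field_simp

lemma eventually_cos_lt_one : ∀ᶠ θ in 𝓝[≠] 0, cos θ < 1 := by
  filter_upwards [tendsto_one_sub_cos_div_sq.eventually (lt_mem_nhds one_half_pos)] with θ h
  refine (cos_le_one θ).lt_of_ne fun h1 => ?_
  simp [h1] at h

lemma one_sub_rpow_le_mul_inv_sub_one {r τ : ℝ} (hr : 0 < r) (hτ : 0 ≤ τ) :
    1 - r ^ τ ≤ τ * (r⁻¹ - 1) := by
  have h1 : τ * log r + 1 ≤ r ^ τ := by
    rw [rpow_def_of_pos hr, mul_comm]; exact add_one_le_exp _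
  nlinarith [one_sub_inv_le_log_of_pos hr]

lemma tendsto_slope_rpow_one (τ : ℝ) :
    Tendsto (slope (fun s : ℝ => s ^ τ) 1) (𝓝[≠] 1) (𝓝 τ) := by
  simpa using hasDerivAt_iff_tendsto_slope.1 (hasDerivAt_rpow_const (p := τ) (Or.inl one_ne_zero))

noncomputable def corrRatio (δ θ : ℝ) : ℝ := (1 - δ) / (1 - δ * cos θ)

section corrRatio

variable {δ : ℝ} (θ : ℝ)

lemma one_sub_mul_cos_pos (h0 : 0 ≤ δ) (h1 : δ < 1) : 0 < 1 - δ * cos θ := by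
  nlinarith [cos_le_one θ]

lemma corrRatio_pos (h0 : 0 ≤ δ) (h1 : δ < 1) : 0 < corrRatio δ θ :=
  div_pos (sub_pos.2 h1) (one_sub_mul_cos_pos θ h0 h1)

lemma corrRatio_le_one (h0 : 0 ≤ δ) (h1 : δ < 1) : corrRatio δ θ ≤ 1 := by
  rw [corrRatio, div_le_one (one_sub_mul_cos_pos θ h0 h1)]
  nlinarith [cos_le_one θ]

lemma corrRatio_zero (h1 : δ ≠ 1) : corrRatio δ 0 = 1 := by
  simp [corrRatio, sub_ne_zero.2 h1.symm]

lemma one_sub_corrRatio (h : 1 - δ * cos θ ≠ 0) :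
    1 - corrRatio δ θ = δ * (1 - cos θ) / (1 - δ * cos θ) := by
  rw [corrRatio]
  field_simp
  ring

lemma one_sub_corrRatio_rpow_le {τ : ℝ} (hτ : 0 ≤ τ) (h0 : 0 ≤ δ) (h1 : δ < 1) :
    1 - corrRatio δ θ ^ τ ≤ τ / 2 * (δ / (1 - δ)) * θ ^ 2 := by
  have hδ : 0 < 1 - δ := sub_pos.2 h1
  have hinv : (corrRatio δ θ)⁻¹ - 1 = δ / (1 - δ) * (1 - cos θ) := by
    rw [corrRatio, inv_div]; field_simp; ring
  calc 1 - corrRatio δ θ ^ τ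
      ≤ τ * ((corrRatio δ θ)⁻¹ - 1) :=
        one_sub_rpow_le_mul_inv_sub_one (corrRatio_pos θ h0 h1) hτ
    _ ≤ τ * (δ / (1 - δ) * (θ ^ 2 / 2)) := by
        rw [hinv]; gcongr; linarith [one_sub_sq_div_two_le_cos (x := θ)]
    _ = τ / 2 * (δ / (1 - δ)) * θ ^ 2 := by ring

end corrRatio

lemma tendsto_one_sub_corrRatio_rpow_div_sq (τ : ℝ) {δ : ℝ} (h0 : 0 < δ) (h1 : δ < 1) :
    Tendsto (fun θ => (1 - corrRatio δ θ ^ τ) / θ ^ 2) (𝓝[≠] 0)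
      (𝓝 (τ / 2 * (δ / (1 - δ)))) := by
  have hden : ∀ θ, 1 - δ * cos θ ≠ 0 := fun θ => (one_sub_mul_cos_pos θ h0.le h1).ne'
  have hr : Tendsto (corrRatio δ) (𝓝[≠] 0) (𝓝[≠] 1) := by
    refine tendsto_nhdsWithin_iff.2 ⟨?_, ?_⟩
    · have : ContinuousAt (corrRatio δ) 0 :=
        continuousAt_const.div (by fun_prop) (hden 0)
      simpa [corrRatio_zero h1.ne] using this.tendsto.mono_left nhdsWithin_le_nhds
    · filter_upwards [eventually_cos_lt_one] with θ hθ
      have : 0 < 1 - corrRatio δ θ := by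
        rw [one_sub_corrRatio θ (hden θ)]
        exact div_pos (mul_pos h0 (sub_pos.2 hθ)) (one_sub_mul_cos_pos θ h0.le h1)
      exact (sub_pos.1 this).ne
  have hfac : Tendsto (fun θ => δ / (1 - δ * cos θ) * ((1 - cos θ) / θ ^ 2)) (𝓝[≠] 0)
      (𝓝 (δ / (1 - δ) * (1 / 2))) := by
    refine Tendsto.mul ?_ tendsto_one_sub_cos_div_sq
    have : ContinuousAt (fun θ => δ / (1 - δ * cos θ)) 0 :=
      continuousAt_const.div (by fun_prop) (hden 0)
    simpa using this.tendsto.mono_left nhdsWithin_le_nhds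
  convert ((tendsto_slope_rpow_one τ).comp hr).mul hfac using 2 with θ
  · -- this factorisation also holds where `corrRatio δ θ = 1`: both sides vanish
    have h := sub_smul_slope (fun s : ℝ => s ^ τ) 1 (corrRatio δ θ)
    rw [smul_eq_mul, vsub_eq_sub, one_rpow] at h
    rw [Function.comp_apply, show 1 - corrRatio δ θ ^ τ =
      slope (fun s : ℝ => s ^ τ) 1 (corrRatio δ θ) * (1 - corrRatio δ θ) by linarith,
      one_sub_corrRatio θ (hden θ)]
    ring
  · ring

lemma div_one_sub_mul_rpow_mul_rpow {δ : ℝ} (h0 : 0 < δ) (h1 : δ < 1) (a b : ℝ) :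
    δ / (1 - δ) * (δ ^ (a - 1) * (1 - δ) ^ (b - 1)) = δ ^ a * (1 - δ) ^ (b - 2) := by
  rw [rpow_sub_one h0.ne', show b - 1 = b - 2 + 1 by ring, rpow_add_one (sub_pos.2 h1).ne']
  have := (sub_pos.2 h1).ne'
  field_simp

section Integral

variable {τ α ν : ℝ}

lemma integrableOn_corrRatio_rpow_mul (hτ : 0 ≤ τ) (hα : 0 < α) (hν : 0 < ν) (θ : ℝ) :
    IntegrableOn (fun δ => corrRatio δ θ ^ τ * δ ^ (α - 1) * (1 - δ) ^ (ν - 1)) (Ioo 0 1) := by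
  simp_rw [mul_assoc]
  refine (integrableOn_rpow_mul_one_sub_rpow (by linarith) (by linarith)).bdd_mul
    (c := 1) (Measurable.aestronglyMeasurable (by unfold corrRatio; fun_prop)) ?_
  filter_upwards [self_mem_ae_restrict measurableSet_Ioo] with δ hδ
  rw [norm_of_nonneg (rpow_nonneg (corrRatio_pos θ hδ.1.le hδ.2).le τ)]
  exact rpow_le_one (corrRatio_pos θ hδ.1.le hδ.2).le (corrRatio_le_one θ hδ.1.le hδ.2) hτ

lemma Ffam_eq_corrRatio (τ α ν θ : ℝ) : Ffam τ α ν θ =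
    1 / betaFn α ν * ∫ δ in Ioo 0 1, corrRatio δ θ ^ τ * δ ^ (α - 1) * (1 - δ) ^ (ν - 1) :=
  rfl

lemma Ffam_zero_sub_div_sq (hτ : 0 ≤ τ) (hα : 0 < α) (hν : 0 < ν) (θ : ℝ) :
    (Ffam τ α ν 0 - Ffam τ α ν θ) / θ ^ 2 = 1 / betaFn α ν *
      ∫ δ in Ioo 0 1, (1 - corrRatio δ θ ^ τ) / θ ^ 2 * (δ ^ (α - 1) * (1 - δ) ^ (ν - 1)) := by
  have hI := integrableOn_corrRatio_rpow_mul hτ hα hν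
  rw [Ffam_eq_corrRatio, Ffam_eq_corrRatio, ← mul_sub, ← integral_sub (hI 0) (hI θ),
    mul_div_assoc, ← integral_div]
  congr 1
  refine setIntegral_congr_fun measurableSet_Ioo fun δ hδ => ?_
  rw [corrRatio_zero hδ.2.ne, one_rpow]
  ring

lemma tendsto_integral_one_sub_corrRatio_rpow_div_sq (hτ : 0 ≤ τ) (hα : 0 < α) (hν : 1 < ν) :
    Tendsto (fun θ => ∫ δ in Ioo 0 1,
        (1 - corrRatio δ θ ^ τ) / θ ^ 2 * (δ ^ (α - 1) * (1 - δ) ^ (ν - 1)))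
      (𝓝[≠] 0) (𝓝 (∫ δ in Ioo 0 1, τ / 2 * (δ ^ α * (1 - δ) ^ (ν - 2)))) := by
  refine tendsto_integral_filter_of_dominated_convergence
    (fun δ => τ / 2 * (δ ^ α * (1 - δ) ^ (ν - 2))) ?_ ?_
    ((integrableOn_rpow_mul_one_sub_rpow (by linarith) (by linarith)).const_mul _) ?_
  · exact .of_forall fun θ => Measurable.aestronglyMeasurable (by unfold corrRatio; fun_prop)
  · refine .of_forall fun θ => ?_
    filter_upwards [self_mem_ae_restrict measurableSet_Ioo] with δ ⟨h0, h1⟩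
    have hδ : 0 < 1 - δ := sub_pos.2 h1
    have hw : 0 ≤ δ ^ (α - 1) * (1 - δ) ^ (ν - 1) := by positivity
    rw [← div_one_sub_mul_rpow_mul_rpow h0 h1, norm_of_nonneg, ← mul_assoc (τ / 2)]
    · refine mul_le_mul_of_nonneg_right (div_le_of_le_mul₀ (sq_nonneg θ) ?_ ?_) hw
      · positivity
      · exact one_sub_corrRatio_rpow_le θ hτ h0.le h1
    · exact mul_nonneg (div_nonneg (sub_nonneg.2 (rpow_le_one (corrRatio_pos θ h0.le h1).le
        (corrRatio_le_one θ h0.le h1) hτ)) (sq_nonneg θ)) hw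
  · filter_upwards [self_mem_ae_restrict measurableSet_Ioo] with δ ⟨h0, h1⟩
    rw [← div_one_sub_mul_rpow_mul_rpow h0 h1, ← mul_assoc]
    exact (tendsto_one_sub_corrRatio_rpow_div_sq τ h0 h1).mul_const _

end Integral

/-- For `ν > 1` the fractal index of the `F`-family is `a = 2`: there is a constant `b > 0`
with `lim_{θ→0⁺} (F_{τ,α,ν}(0) - F_{τ,α,ν}(θ))/θ² = b`. -/
theorem Ffam_fractal_index_of_one_lt_nu (τ α ν : ℝ)
    (hτ : 0 < τ) (hα : 0 < α) (hν : 1 < ν) :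
    ∃ b : ℝ, 0 < b ∧
      Filter.Tendsto (fun θ : ℝ => (Ffam τ α ν 0 - Ffam τ α ν θ) / θ ^ 2)
        (nhdsWithin 0 (Set.Ioi 0)) (nhds b) := by
  have hB : 0 < betaFn α ν := ProbabilityTheory.beta_pos hα (by linarith)
  refine ⟨1 / betaFn α ν * ∫ δ in Ioo 0 1, τ / 2 * (δ ^ α * (1 - δ) ^ (ν - 2)), ?_, ?_⟩
  · have := integral_rpow_mul_one_sub_rpow_pos (p := α) (q := ν - 2) (by linarith) (by linarith)
    rw [integral_const_mul]
    exact mul_pos (one_div_pos.2 hB) (mul_pos (by positivity) this)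
  · simp_rw [Ffam_zero_sub_div_sq hτ.le hα (by linarith : 0 < ν)]
    exact ((tendsto_integral_one_sub_corrRatio_rpow_div_sq hτ.le hα hν).const_mul _).mono_left
      (nhdsGT_le_nhdsNE 0)
end
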